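/- arXiv:2503.12432 — 3 statements merged into one kernel-verified Lean document; each statement's English description precedes it below -/
import Mathlib

section
/- Let n ≥ 2 be an integer and let α, β, λ be real numbers with β ≠ 0, and let V, Z be nonnegative real numbers (representing |v|² and |Z|² respectively). Suppose that (α + 2β)λ² + βV - αZ = 0 and (β - (n-1)α)λ² + βV + (2β + (n-1)α)Z = 0. Then λ = 0, V = 0, and Z = 0. -/
theorem stmt_0 (n : ℕ) (hn : 2 ≤ n) (α β c lam V Z : ℝ) (hβ : β ≠ 0)
    (hV : 0 ≤ V) (hZ : 0 ≤ Z)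
    (h1 : (α + 2*β)*lam^2 + β*V - α*Z = -c)
    (hc : c = 0)
    (h2 : (α + 2*β)*lam^2 + β*V - α*Z = 0)
    (h3 : (β - ((n:ℝ)-1)*α)*lam^2 + β*V + (2*β + ((n:ℝ)-1)*α)*Z = 0) :
    lam = 0 ∧ V = 0 ∧ Z = 0 := by
  have hn' : (2:ℝ) ≤ n := by exact_mod_cast hn
  have hl : 0 ≤ lam^2 := sq_nonneg lam
  have key : β * ((2*(n:ℝ)-1)*lam^2 + (n:ℝ)*V + 2*Z) = 0 := by nlinarith [h2, h3]
  have hsum : (2*(n:ℝ)-1)*lam^2 + (n:ℝ)*V + 2*Z = 0 := by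
    rcases mul_eq_zero.mp key with h | h
    · exact absurd h hβ
    · exact h
  have hL : lam^2 = 0 := by nlinarith
  refine ⟨pow_eq_zero_iff (n := 2) (by norm_num) |>.mp hL, by nlinarith, by nlinarith⟩
end

section
/- Let λ, v, Z ∈ ℂ with λ real, and suppose: (i) λ² + λ(Y + conj(Y)) = |Z|² and Y·Z = 0 for some Y ∈ ℂ; (ii) c = β|Z|² for reals β ≠ 0, c; (iii) (2β + α)λ² + β|v|² + (β + α)|Z|² = 0 and (β - α)λ² + β|v|² - (6β + α)|Z|² = 0 for a real α; (iv) if α = -2β then additionally v·conj(Z) = 0. Then λ = 0, v = 0, Z = 0, and c = 0. -/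
theorem stmt_9 (lam α β c : ℝ) (v Z Y : ℂ) (hβ : β ≠ 0)
    (hJ1 : ((lam:ℂ))^2 + (lam:ℂ) * (Y + (starRingEnd ℂ) Y) = ((‖Z‖^2 : ℝ) : ℂ))
    (hJ2 : Y * Z = 0)
    (hc : c = β * ‖Z‖^2)
    (h1 : (2*β + α)*lam^2 + β*‖v‖^2 + (β + α)*‖Z‖^2 = 0)
    (h2 : (β - α)*lam^2 + β*‖v‖^2 - (6*β + α)*‖Z‖^2 = 0)
    (h3 : α = -2*β → v * (starRingEnd ℂ) Z = 0) :
    lam = 0 ∧ v = 0 ∧ Z = 0 ∧ c = 0 := by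
  have hv2 : (0:ℝ) ≤ ‖v‖^2 := sq_nonneg _
  have hZ2 : (0:ℝ) ≤ ‖Z‖^2 := sq_nonneg _
  have hl2 : (0:ℝ) ≤ lam^2 := sq_nonneg _
  have hsum : 3*lam^2 + 2*‖v‖^2 - 5*‖Z‖^2 = 0 := by
    have hb : β * (3*lam^2 + 2*‖v‖^2 - 5*‖Z‖^2) = 0 := by ring_nf; ring_nf at h1 h2; linarith
    rcases mul_eq_zero.1 hb with h | h
    · exact absurd h hβ
    · exact h
  -- helper: the Z = 0 case
  have key : Z = 0 → lam = 0 ∧ v = 0 ∧ Z = 0 ∧ c = 0 := by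
    intro hZ
    subst hZ
    simp only [norm_zero] at hsum hc
    have hlam : lam^2 = 0 := by nlinarith
    have hvn : ‖v‖^2 = 0 := by nlinarith
    refine ⟨pow_eq_zero_iff (by norm_num) |>.1 hlam, ?_, rfl, by simpa using hc⟩
    simpa using norm_eq_zero.1 (pow_eq_zero_iff (n := 2) (by norm_num) |>.1 hvn)
  rcases mul_eq_zero.1 hJ2 with hY | hZ
  · -- Y = 0
    subst hY
    simp only [map_zero, add_zero, mul_zero] at hJ1
    have hx : lam^2 = ‖Z‖^2 := by exact_mod_cast hJ1
    have hcase : (2*β + α) * lam^2 = 0 := by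
      linear_combination ((1:ℝ)/4)*h1 - ((1:ℝ)/4)*h2 + ((7*β+2*α)/4)*hx
    rcases mul_eq_zero.1 hcase with h | h
    · have hα : α = -2*β := by linarith
      rcases mul_eq_zero.1 (h3 hα) with hv | hZc
      · -- v = 0
        have hw : ‖v‖^2 = 0 := by simp [hv]
        have hlam : lam^2 = 0 := by nlinarith
        have hz : ‖Z‖^2 = 0 := by linarith
        refine ⟨pow_eq_zero_iff (by norm_num) |>.1 hlam, hv,
          norm_eq_zero.1 (pow_eq_zero_iff (n := 2) (by norm_num) |>.1 hz), ?_⟩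
        rw [hc, hz, mul_zero]
      · -- conj Z = 0 → Z = 0
        exact key (by simpa using congrArg (starRingEnd ℂ) hZc)
    · have hz : ‖Z‖^2 = 0 := by linarith
      exact key (norm_eq_zero.1 (pow_eq_zero_iff (n := 2) (by norm_num) |>.1 hz))
  · exact key hZ
end

section
/- Define, for a type (1,0) vector X = (X₁, X₂, X₃) ∈ ℂ³, the quantities t = |X₁|² + |X₃|², s = |X₁X₃|², H(X) = 2|X₂|⁴ + 3t|X₂|² + (2t² - 6s), and K(X) = 4|X₂|⁴ + 6t|X₂|² + 2t². If α, β, c are real numbers such that α·K(X) + β·H(X) = c·(t + |X₂|²)² for all X ∈ ℂ³, then α = β = c = 0. -/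
theorem stmt_12 (α β c : ℝ)
    (h : ∀ X₁ X₂ X₃ : ℂ,
      α * (4*‖X₂‖^4 + 6*(‖X₁‖^2 + ‖X₃‖^2)*‖X₂‖^2 + 2*(‖X₁‖^2 + ‖X₃‖^2)^2)
      + β * (2*‖X₂‖^4 + 3*(‖X₁‖^2 + ‖X₃‖^2)*‖X₂‖^2
          + (2*(‖X₁‖^2 + ‖X₃‖^2)^2 - 6*‖X₁*X₃‖^2))
      = c * ((‖X₁‖^2 + ‖X₃‖^2) + ‖X₂‖^2)^2) :
    α = 0 ∧ β = 0 ∧ c = 0 := by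
  have h1 := h 1 0 0
  have h2 := h 0 1 0
  have h3 := h 1 0 1
  simp [norm_one] at h1 h2 h3
  refine ⟨by linarith, by linarith, by linarith⟩
end
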